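/- Let n ≥ 1, g ≥ 1, let x_1, …, x_n ∈ ℝ, and let z_{ik} ∈ {0,1} (1 ≤ i ≤ n, 1 ≤ k ≤ g) satisfy Σ_{k=1}^g z_{ik} = 1 for every i, with class sizes n_k = Σ_i z_{ik} ≥ 1 for every k. Let α > 0, β > 0, δ > 0, λ ∈ ℝ, and for each k set x̄_k = (1/n_k) Σ_i z_{ik} x_i and s_k² = β² + Σ_i z_{ik}(x_i − x̄_k)² + (n_kδ/(n_k+δ))·(x̄_k − λ)². Then ∫ … ∫ (∏_{i=1}^n ∏_{k=1}^g φ(x_i | μ_k, σ_k²)^{z_{ik}}) · ∏_{k=1}^g [φ(μ_k | λ, σ_k²/δ) · ig(σ_k²; α/2, β²/2)] dμ_1 dσ_1² ⋯ dμ_g dσ_g², integrated over (μ_k, σ_k²) ∈ ℝ × (0,∞) for each k, equals ∏_{k=1}^g π^{−n_k/2} · (Γ((n_k+α)/2)/Γ(α/2)) · (β^α / s_k^{n_k+α}) · √(δ/(n_k+δ)). -/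

import Mathlib

/-!
The integrand factorises over the classes and the parameter domain is a product, so the
integral is the product over `k` of one integral over `(μ, v) ∈ ℝ × (0, ∞)`. In a class of
size `N`, completing the square in `μ` turns likelihood times prior into a constant times
`v ^ (-(a + 1) - 1/2) * exp (-(s² / 2 + (N + δ) / 2 * (μ - m) ^ 2) / v)` with
`a = (N + α) / 2`. The Gaussian integral in `μ` leaves the inverse-gamma kernel
`v ^ (-(a + 1)) * exp (-(s² / 2) / v)`, whose integral `Γ(a) / (s² / 2) ^ a` is the Gamma
integral after the substitution `v = 1 / t`.
-/

open MeasureTheory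

/-- The univariate Gaussian density `φ(x | μ, σ²) = (2πσ²)^{-1/2} exp(-(x-μ)²/(2σ²))`. -/
noncomputable def gaussPdf (x μ v : ℝ) : ℝ :=
  (2 * Real.pi * v) ^ (-(1 : ℝ) / 2) * Real.exp (-(x - μ) ^ 2 / (2 * v))

/-- The Inverse-Gamma density `ig(v; a, b) = (b^a / Γ(a)) v^{-a-1} exp(-b/v)`. -/
noncomputable def invGammaPdf (v a b : ℝ) : ℝ :=
  b ^ a / Real.Gamma a * v ^ (-(a + 1)) * Real.exp (-b / v)

open Real Set

theorem integral_rpow_neg_mul_exp_neg_div_Ioi {a b : ℝ} (ha : 0 < a) (hb : 0 < b) :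
    ∫ v in Ioi (0 : ℝ), v ^ (-(a + 1)) * exp (-b / v) = Gamma a / b ^ a := by
  have hsubst : ∫ t in Ioi (0 : ℝ), t ^ (a - 1) * exp (-(b * t))
      = ∫ v in Ioi (0 : ℝ), v ^ (-(a + 1)) * exp (-b / v) := by
    rw [← integral_comp_rpow_Ioi _ (p := -1) (by norm_num)]
    refine setIntegral_congr_fun measurableSet_Ioi fun t (ht : 0 < t) => ?_
    rw [smul_eq_mul, rpow_neg_one, inv_rpow ht.le, ← rpow_neg ht.le, ← mul_assoc, abs_neg, abs_one,
      one_mul, ← rpow_add ht, neg_div, div_eq_mul_inv]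
    ring_nf
  rw [← hsubst, integral_rpow_mul_exp_neg_mul_Ioi ha hb, one_div, inv_rpow hb.le, div_eq_inv_mul]

theorem integrableOn_rpow_neg_mul_exp_neg_div_Ioi {a b : ℝ} (ha : 0 < a) (hb : 0 < b) :
    IntegrableOn (fun v : ℝ => v ^ (-(a + 1)) * exp (-b / v)) (Ioi 0) :=
  .of_integral_ne_zero <| by rw [integral_rpow_neg_mul_exp_neg_div_Ioi ha hb]; positivity

theorem integral_exp_neg_mul_sub_sq (c m : ℝ) :
    ∫ u : ℝ, exp (-(c * (u - m) ^ 2)) = √(π / c) := by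
  simpa only [neg_mul] using (integral_sub_right_eq_self (fun u => exp (-c * u ^ 2)) m).trans
    (integral_gaussian c)

theorem integral_rpow_mul_exp_neg_add_mul_sub_sq_div {v : ℝ} (hv : 0 < v) (s b m : ℝ) {c : ℝ}
    (hc : 0 < c) :
    ∫ u : ℝ, v ^ s * exp (-(b + c / 2 * (u - m) ^ 2) / v)
      = √(2 * π / c) * (v ^ (s + 1 / 2) * exp (-b / v)) := by
  have hsplit : ∀ u : ℝ, v ^ s * exp (-(b + c / 2 * (u - m) ^ 2) / v)
      = v ^ s * exp (-b / v) * exp (-(c / (2 * v) * (u - m) ^ 2)) := fun u => by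
    rw [mul_assoc, ← exp_add]; field_simp; ring_nf
  have hsqrt : √(π / (c / (2 * v))) = √(2 * π / c) * v ^ (1 / 2 : ℝ) := by
    rw [← sqrt_eq_rpow, ← sqrt_mul (by positivity)]; field_simp
  simp_rw [hsplit, integral_const_mul, integral_exp_neg_mul_sub_sq, hsqrt, rpow_add hv]
  ring

theorem integral_normalInvGamma_kernel {a b c : ℝ} (m : ℝ) (ha : 0 < a) (hb : 0 < b)
    (hc : 0 < c) :
    ∫ p : ℝ × ℝ in univ ×ˢ Ioi 0,
        p.2 ^ (-(a + 1) - 1 / 2) * exp (-(b + c / 2 * (p.1 - m) ^ 2) / p.2)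
      = √(2 * π / c) * (Gamma a / b ^ a) := by
  set f : ℝ × ℝ → ℝ := fun p => p.2 ^ (-(a + 1) - 1 / 2) * exp (-(b + c / 2 * (p.1 - m) ^ 2) / p.2)
  have hinner : ∀ v ∈ Ioi (0 : ℝ), ∫ u, f (u, v) = √(2 * π / c) * (v ^ (-(a + 1)) * exp (-b / v)) :=
    fun v hv => by
      rw [integral_rpow_mul_exp_neg_add_mul_sub_sq_div hv _ _ _ hc, sub_add_cancel]
  have hf_nonneg : ∀ v ∈ Ioi (0 : ℝ), ∀ u, 0 ≤ f (u, v) := fun v (hv : 0 < v) u => by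
    positivity
  rw [Measure.volume_eq_prod, ← Measure.prod_restrict, Measure.restrict_univ]
  have hf : Integrable f (volume.prod (volume.restrict (Ioi 0))) := by
    refine (integrable_prod_iff' (by fun_prop)).2 ⟨?_, ?_⟩
    · filter_upwards [ae_restrict_mem measurableSet_Ioi] with v (hv : 0 < v)
      exact .of_integral_ne_zero (by rw [hinner v hv]; positivity)
    · refine ((integrableOn_rpow_neg_mul_exp_neg_div_Ioi ha hb).const_mul (√(2 * π / c))).congr ?_
      filter_upwards [ae_restrict_mem measurableSet_Ioi] with v hv
      simp_rw [← hinner v hv, norm_of_nonneg (hf_nonneg v hv _)]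
  rw [integral_prod_symm f hf, setIntegral_congr_fun measurableSet_Ioi hinner, integral_const_mul,
    integral_rpow_neg_mul_exp_neg_div_Ioi ha hb]

theorem sum_mul_sq_sub_eq {ι : Type*} (s : Finset ι) (w x : ι → ℝ) (t : ℝ) :
    ∑ i ∈ s, w i * (x i - t) ^ 2
      = ∑ i ∈ s, w i * x i ^ 2 - 2 * t * ∑ i ∈ s, w i * x i + t ^ 2 * ∑ i ∈ s, w i := by
  simp only [Finset.mul_sum, ← Finset.sum_sub_distrib, ← Finset.sum_add_distrib]
  exact Finset.sum_congr rfl fun i _ => by ring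

theorem sum_mul_sq_sub_add_mul_sq_sub {ι : Type*} (s : Finset ι) (w x : ι → ℝ) {N xb δ : ℝ}
    (hN : ∑ i ∈ s, w i = N) (hxb : N * xb = ∑ i ∈ s, w i * x i) (hNδ : N + δ ≠ 0) (u lam : ℝ) :
    ∑ i ∈ s, w i * (x i - u) ^ 2 + δ * (u - lam) ^ 2
      = ∑ i ∈ s, w i * (x i - xb) ^ 2 + N * δ / (N + δ) * (xb - lam) ^ 2
        + (N + δ) * (u - (N * xb + δ * lam) / (N + δ)) ^ 2 := by
  rw [sum_mul_sq_sub_eq, sum_mul_sq_sub_eq, hN, ← hxb]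
  field_simp
  ring

theorem prod_gaussPdf_pow {ι : Type*} (s : Finset ι) (x : ι → ℝ) (w : ι → ℕ) (u : ℝ) {v : ℝ}
    (hv : 0 < v) :
    ∏ i ∈ s, gaussPdf (x i) u v ^ w i
      = (2 * π * v) ^ (-(∑ i ∈ s, (w i : ℝ)) / 2)
        * exp (-(∑ i ∈ s, w i * (x i - u) ^ 2) / (2 * v)) := by
  have hfactor : ∀ i, gaussPdf (x i) u v ^ w i
      = (2 * π * v) ^ (-(w i : ℝ) / 2) * exp (-(w i * (x i - u) ^ 2) / (2 * v)) := fun i => by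
    rw [gaussPdf, mul_pow, ← rpow_natCast, ← rpow_mul (by positivity), ← exp_nat_mul]
    congr 2 <;> ring
  rw [Finset.prod_congr rfl fun i _ => hfactor i, Finset.prod_mul_distrib,
    ← rpow_sum_of_pos (by positivity), ← exp_sum, ← Finset.sum_div, ← Finset.sum_div,
    Finset.sum_neg_distrib, Finset.sum_neg_distrib]

section PerClass

variable {ι : Type*} (s : Finset ι) (x : ι → ℝ) (w : ι → ℕ) {α β δ : ℝ} (lam : ℝ) {N xb : ℝ}

theorem prod_gaussPdf_pow_mul_prior_eq (hδ : 0 < δ) (hN : ∑ i ∈ s, (w i : ℝ) = N)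
    (hxb : N * xb = ∑ i ∈ s, w i * x i) (u : ℝ) {v : ℝ} (hv : 0 < v) :
    (∏ i ∈ s, gaussPdf (x i) u v ^ w i)
        * (gaussPdf u lam (v / δ) * invGammaPdf v (α / 2) (β ^ 2 / 2))
      = (2 * π) ^ (-N / 2) * (2 * π / δ) ^ (-(1 : ℝ) / 2) * ((β ^ 2 / 2) ^ (α / 2) / Gamma (α / 2))
        * (v ^ (-((N + α) / 2 + 1) - 1 / 2)
          * exp (-((β ^ 2 + ∑ i ∈ s, w i * (x i - xb) ^ 2 + N * δ / (N + δ) * (xb - lam) ^ 2) / 2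
            + (N + δ) / 2 * (u - (N * xb + δ * lam) / (N + δ)) ^ 2) / v)) := by
  have hN0 : 0 ≤ N := hN ▸ by positivity
  have hpow : (2 * π * v) ^ (-N / 2) * (2 * π * (v / δ)) ^ (-(1 : ℝ) / 2) * v ^ (-(α / 2 + 1))
      = (2 * π) ^ (-N / 2) * (2 * π / δ) ^ (-(1 : ℝ) / 2) * v ^ (-((N + α) / 2 + 1) - 1 / 2) := by
    rw [mul_rpow (by positivity) hv.le, show 2 * π * (v / δ) = 2 * π / δ * v by ring,
      mul_rpow (by positivity) hv.le,
      show -((N + α) / 2 + 1) - 1 / 2 = -N / 2 + -(1 : ℝ) / 2 + -(α / 2 + 1) by ring,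
      rpow_add hv, rpow_add hv]
    ring
  have hexp : -(∑ i ∈ s, w i * (x i - u) ^ 2) / (2 * v) + -(u - lam) ^ 2 / (2 * (v / δ))
        + -(β ^ 2 / 2) / v
      = -((β ^ 2 + ∑ i ∈ s, w i * (x i - xb) ^ 2 + N * δ / (N + δ) * (xb - lam) ^ 2) / 2
            + (N + δ) / 2 * (u - (N * xb + δ * lam) / (N + δ)) ^ 2) / v := by
    calc _ = -(β ^ 2 + (∑ i ∈ s, w i * (x i - u) ^ 2 + δ * (u - lam) ^ 2)) / (2 * v) := by
          field_simp
          ring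
      _ = _ := by
          rw [sum_mul_sq_sub_add_mul_sq_sub s (fun i => (w i : ℝ)) x hN hxb (by positivity) u lam]
          ring
  calc _ = ((2 * π * v) ^ (-N / 2) * (2 * π * (v / δ)) ^ (-(1 : ℝ) / 2) * v ^ (-(α / 2 + 1)))
        * ((β ^ 2 / 2) ^ (α / 2) / Gamma (α / 2))
        * exp (-(∑ i ∈ s, w i * (x i - u) ^ 2) / (2 * v) + -(u - lam) ^ 2 / (2 * (v / δ))
          + -(β ^ 2 / 2) / v) := by
        rw [prod_gaussPdf_pow s x w u hv, hN, gaussPdf, invGammaPdf, exp_add, exp_add]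
        ring
    _ = _ := by
        rw [hpow, hexp]
        ring

theorem integral_prod_gaussPdf_pow_mul_prior (hα : 0 < α) (hβ : 0 < β) (hδ : 0 < δ)
    (hN : ∑ i ∈ s, (w i : ℝ) = N) (hxb : N * xb = ∑ i ∈ s, w i * x i) :
    ∫ p : ℝ × ℝ in univ ×ˢ Ioi 0, (∏ i ∈ s, gaussPdf (x i) p.1 p.2 ^ w i)
        * (gaussPdf p.1 lam (p.2 / δ) * invGammaPdf p.2 (α / 2) (β ^ 2 / 2))
      = π ^ (-N / 2) * (Gamma ((N + α) / 2) / Gamma (α / 2))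
        * (β ^ α / √(β ^ 2 + ∑ i ∈ s, w i * (x i - xb) ^ 2 + N * δ / (N + δ) * (xb - lam) ^ 2)
          ^ (N + α))
        * √(δ / (N + δ)) := by
  subst hN
  set N := ∑ i ∈ s, (w i : ℝ)
  set s2 := β ^ 2 + ∑ i ∈ s, w i * (x i - xb) ^ 2 + N * δ / (N + δ) * (xb - lam) ^ 2
  have hs2 : 0 < s2 := by positivity
  rw [setIntegral_congr_fun (MeasurableSet.univ.prod measurableSet_Ioi)
      fun p hp => prod_gaussPdf_pow_mul_prior_eq s x w lam hδ rfl hxb p.1 hp.2,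
    integral_const_mul, integral_normalInvGamma_kernel _ (by positivity) (by positivity)
      (by positivity)]
  rw [← (log_injOn_pos).eq_iff (by simp only [mem_Ioi]; positivity)
    (by simp only [mem_Ioi]; positivity)]
  simp (disch := positivity) only [log_mul, log_div, log_rpow, log_pow, sqrt_eq_rpow]
  ring

end PerClass

theorem setIntegral_univ_pi_prod {ι : Type*} [Fintype ι] {E : ι → Type*} [∀ k, MeasureSpace (E k)]
    [∀ k, SigmaFinite (volume : Measure (E k))] (S : (k : ι) → Set (E k))
    (f : (k : ι) → E k → ℝ) :
    ∫ θ in univ.pi S, ∏ k, f k (θ k) = ∏ k, ∫ p in S k, f k p := by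
  rw [volume_pi, Measure.restrict_pi_pi, integral_fintype_prod_eq_prod]

theorem marginal_likelihood_relevant_variable_general (n g : ℕ)
    (x : Fin n → ℝ) (z : Fin n → Fin g → ℕ)
    (nk : Fin g → ℕ) (hnk : ∀ k, nk k = ∑ i, z i k) (hnk1 : ∀ k, 1 ≤ nk k)
    (α β δ lam : ℝ) (hα : 0 < α) (hβ : 0 < β) (hδ : 0 < δ) :
    let xbar : Fin g → ℝ := fun k => (1 / (nk k : ℝ)) * ∑ i, (z i k : ℝ) * x i
    let s2 : Fin g → ℝ := fun k => β ^ 2 + (∑ i, (z i k : ℝ) * (x i - xbar k) ^ 2)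
      + ((nk k : ℝ) * δ / ((nk k : ℝ) + δ)) * (xbar k - lam) ^ 2
    (∫ θ in {θ : Fin g → ℝ × ℝ | ∀ k, 0 < (θ k).2},
        (∏ i, ∏ k, gaussPdf (x i) (θ k).1 (θ k).2 ^ z i k)
          * ∏ k, gaussPdf (θ k).1 lam ((θ k).2 / δ) * invGammaPdf (θ k).2 (α / 2) (β ^ 2 / 2))
      = ∏ k, Real.pi ^ (-(nk k : ℝ) / 2)
          * (Real.Gamma (((nk k : ℝ) + α) / 2) / Real.Gamma (α / 2))
          * (β ^ α / Real.sqrt (s2 k) ^ ((nk k : ℝ) + α))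
          * Real.sqrt (δ / ((nk k : ℝ) + δ)) := by
  intro xbar s2
  have hS : {θ : Fin g → ℝ × ℝ | ∀ k, 0 < (θ k).2} = univ.pi fun _ => univ ×ˢ Ioi 0 := by
    ext θ
    simp
  simp_rw [hS, Finset.prod_comm (s := (Finset.univ : Finset (Fin n))), ← Finset.prod_mul_distrib]
  rw [setIntegral_univ_pi_prod _ fun k (p : ℝ × ℝ) => (∏ i, gaussPdf (x i) p.1 p.2 ^ z i k)
    * (gaussPdf p.1 lam (p.2 / δ) * invGammaPdf p.2 (α / 2) (β ^ 2 / 2))]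
  refine Finset.prod_congr rfl fun k _ => ?_
  have hN : ∑ i, (z i k : ℝ) = nk k := by simp [hnk]
  have hxb : (nk k : ℝ) * xbar k = ∑ i, z i k * x i := by
    have : (nk k : ℝ) ≠ 0 := Nat.cast_ne_zero.2 (Nat.one_le_iff_ne_zero.1 (hnk1 k))
    simp only [xbar]
    field_simp
  exact integral_prod_gaussPdf_pow_mul_prior _ x _ lam hα hβ hδ hN hxb

/-- Closed-form per-variable factor of the integrated complete-data likelihood for a
relevant variable: given a partition `z` of `n` observations into `g` nonempty classes,
the integral over `(μ_k, σ_k²) ∈ ℝ × (0,∞)` for each `k` of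
`(∏ᵢ∏ₖ φ(xᵢ|μₖ,σₖ²)^{z_{ik}}) ∏ₖ φ(μₖ|λ,σₖ²/δ) ig(σₖ²;α/2,β²/2)` equals
`∏ₖ π^{-n_k/2} (Γ((n_k+α)/2)/Γ(α/2)) (β^α/s_k^{n_k+α}) √(δ/(n_k+δ))`. -/
theorem marginal_likelihood_relevant_variable (n g : ℕ) (hn : 1 ≤ n) (hg : 1 ≤ g)
    (x : Fin n → ℝ) (z : Fin n → Fin g → ℕ)
    (hz01 : ∀ i k, z i k ≤ 1) (hz : ∀ i, ∑ k, z i k = 1)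
    (nk : Fin g → ℕ) (hnk : ∀ k, nk k = ∑ i, z i k) (hnk1 : ∀ k, 1 ≤ nk k)
    (α β δ lam : ℝ) (hα : 0 < α) (hβ : 0 < β) (hδ : 0 < δ) :
    let xbar : Fin g → ℝ := fun k => (1 / (nk k : ℝ)) * ∑ i, (z i k : ℝ) * x i
    let s2 : Fin g → ℝ := fun k => β ^ 2 + (∑ i, (z i k : ℝ) * (x i - xbar k) ^ 2)
      + ((nk k : ℝ) * δ / ((nk k : ℝ) + δ)) * (xbar k - lam) ^ 2
    (∫ θ in {θ : Fin g → ℝ × ℝ | ∀ k, 0 < (θ k).2},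
        (∏ i, ∏ k, gaussPdf (x i) (θ k).1 (θ k).2 ^ z i k)
          * ∏ k, gaussPdf (θ k).1 lam ((θ k).2 / δ) * invGammaPdf (θ k).2 (α / 2) (β ^ 2 / 2))
      = ∏ k, Real.pi ^ (-(nk k : ℝ) / 2)
          * (Real.Gamma (((nk k : ℝ) + α) / 2) / Real.Gamma (α / 2))
          * (β ^ α / Real.sqrt (s2 k) ^ ((nk k : ℝ) + α))
          * Real.sqrt (δ / ((nk k : ℝ) + δ)) :=
  marginal_likelihood_relevant_variable_general n g x z nk hnk hnk1 α β δ lam hα hβ hδ
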